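/- arXiv:2107.13846 — 5 statements merged into one kernel-verified Lean document; each statement's English description precedes it below -/
import Mathlib

section
/- For $n \geq 2$, $c > 0$, $k > 0$, $z > 0$, the quintuple $((z+1)c, kc, c, (z+1)c, (k+1)c)$ is admissible if and only if $-nz^3 + (k^2-3n)z^2 - (3n+2k)z - (n-1) \geq 0$. -/
def Admissible (n : ℕ) (a b c d θ : ℝ) : Prop :=
  d ≥ a ∧ a > c ∧ c > 0 ∧ θ > b ∧ b ≥ 0 ∧
  (a - c)^2 * θ^2 - a * (θ - b) * ((2*θ + n*a) * (a - c) + a * (n - 1) * (θ - b)) ≥ 0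

/-- The admissibility form is homogeneous of degree 4 in `(a, b, c, θ)`. -/
lemma admissibility_form_scaled (n c k z : ℝ) :
    ((z+1)*c - c)^2 * ((k+1)*c)^2 - ((z+1)*c) * ((k+1)*c - k*c) *
      ((2*((k+1)*c) + n*((z+1)*c)) * ((z+1)*c - c) + ((z+1)*c) * (n - 1) * ((k+1)*c - k*c))
      = c^4 * (-n*z^3 + (k^2 - 3*n)*z^2 - (3*n + 2*k)*z - (n - 1)) := by
  ring

theorem stmt_2_general (n : ℕ) (c k z : ℝ) (hc : 0 < c) (hk : 0 < k) (hz : 0 < z) :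
    Admissible n ((z+1)*c) (k*c) c ((z+1)*c) ((k+1)*c) ↔
      -(n:ℝ)*z^3 + (k^2 - 3*n)*z^2 - (3*n + 2*k)*z - (n - 1) ≥ 0 := by
  have hc4 : 0 < c^4 := by positivity
  rw [Admissible, admissibility_form_scaled]
  constructor
  · exact fun h => (mul_nonneg_iff_of_pos_left hc4).1 h.2.2.2.2.2
  · intro h
    exact ⟨le_rfl, by nlinarith, hc, by linarith, by positivity,
      (mul_nonneg_iff_of_pos_left hc4).2 h⟩

theorem stmt_2 (n : ℕ) (hn : 2 ≤ n) (c k z : ℝ) (hc : 0 < c) (hk : 0 < k) (hz : 0 < z) :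
    Admissible n ((z+1)*c) (k*c) c ((z+1)*c) ((k+1)*c) ↔
      -(n:ℝ)*z^3 + (k^2 - 3*n)*z^2 - (3*n + 2*k)*z - (n - 1) ≥ 0 :=
  stmt_2_general n c k z hc hk hz
end

section
/- Let $n \geq 2$ and let $k(n)$ be the unique positive root of $k^3 - \frac{27}{4}nk - \frac{27}{4}n$. For every real $k \geq k(n)$, the quantity $z(k,n) = \frac{k^2 - 3n + \sqrt{k^4 - 6nk^2 - 6nk}}{3n}$ satisfies $z(k,n) \geq 2$. -/
/-!
Write `D = k⁴ - 6nk² - 6nk`. The claim `z(k,n) ≥ 2` amounts to `√D ≥ 9n - k²`, and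
`D - (9n - k²)² = n (12k² - 6k - 81n)`, so it suffices that `27n ≤ 4k² - 2k`.
At the root `k(n)` the cubic gives `27n (k + 1) = 4k³`, whence `4k² - 2k - 27n = 2k(k - 1)/(k + 1) ≥ 0`
since `k(n) ≥ 1`; and `4k² - 2k` increases for `k ≥ 1`.
-/

lemma one_le_of_cubic_root {n x : ℝ} (hn : 1 ≤ n) (hx : 0 < x)
    (h : x ^ 3 - 27 / 4 * n * x - 27 / 4 * n = 0) : 1 ≤ x := by
  by_contra! hx1
  have : x ^ 3 < 1 := pow_lt_one₀ hx.le hx1 (by norm_num)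
  nlinarith

lemma le_four_mul_sq_sub_of_cubic_root {n x : ℝ} (hx : 1 ≤ x)
    (h : x ^ 3 - 27 / 4 * n * x - 27 / 4 * n = 0) : 27 * n ≤ 4 * x ^ 2 - 2 * x := by
  have hcubic : 27 * n * (x + 1) = 4 * x ^ 3 := by linarith
  have : 0 ≤ 2 * x * (x - 1) := by nlinarith
  nlinarith

lemma four_mul_sq_sub_two_mul_le {x k : ℝ} (hx : 1 ≤ x) (hxk : x ≤ k) :
    4 * x ^ 2 - 2 * x ≤ 4 * k ^ 2 - 2 * k := by
  nlinarith

lemma sq_sub_le_of_le_four_mul_sq_sub {n k : ℝ} (hn : 0 ≤ n)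
    (h : 27 * n ≤ 4 * k ^ 2 - 2 * k) :
    (9 * n - k ^ 2) ^ 2 ≤ k ^ 4 - 6 * n * k ^ 2 - 6 * n * k := by
  have hdiff : k ^ 4 - 6 * n * k ^ 2 - 6 * n * k - (9 * n - k ^ 2) ^ 2
      = 3 * n * (4 * k ^ 2 - 2 * k - 27 * n) := by ring
  nlinarith [mul_nonneg hn (sub_nonneg.mpr h)]

lemma two_le_of_le_four_mul_sq_sub {n k : ℝ} (hn : 0 < n)
    (h : 27 * n ≤ 4 * k ^ 2 - 2 * k) :
    2 ≤ (k ^ 2 - 3 * n + Real.sqrt (k ^ 4 - 6 * n * k ^ 2 - 6 * n * k)) / (3 * n) := by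
  have hsqrt : 9 * n - k ^ 2 ≤ Real.sqrt (k ^ 4 - 6 * n * k ^ 2 - 6 * n * k) :=
    (le_abs_self _).trans (Real.abs_le_sqrt (sq_sub_le_of_le_four_mul_sq_sub hn.le h))
  rw [le_div_iff₀ (by positivity)]
  linarith

theorem stmt_14_general (n : ℕ) (kn k : ℝ)
    (hkn : 0 < kn ∧ kn^3 - (27/4)*n*kn - (27/4)*n = 0 ∧
      ∀ x : ℝ, 0 < x → x^3 - (27/4)*n*x - (27/4)*n = 0 → x = kn)
    (hk : kn ≤ k) :
    (k^2 - 3*n + Real.sqrt (k^4 - 6*n*k^2 - 6*n*k)) / (3*n) ≥ 2 := by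
  obtain ⟨hpos, hroot, -⟩ := hkn
  have hn : n ≠ 0 := by
    rintro rfl
    simp only [Nat.cast_zero, mul_zero, zero_mul, sub_zero] at hroot
    exact (pow_pos hpos 3).ne' hroot
  have hn1 : (1 : ℝ) ≤ n := Nat.one_le_cast.mpr (Nat.one_le_iff_ne_zero.mpr hn)
  have hkn1 := one_le_of_cubic_root hn1 hpos hroot
  exact two_le_of_le_four_mul_sq_sub (by linarith)
    ((le_four_mul_sq_sub_of_cubic_root hkn1 hroot).trans (four_mul_sq_sub_two_mul_le hkn1 hk))

theorem stmt_14 (n : ℕ) (hn : 2 ≤ n) (kn k : ℝ)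
    (hkn : 0 < kn ∧ kn^3 - (27/4)*n*kn - (27/4)*n = 0 ∧
      ∀ x : ℝ, 0 < x → x^3 - (27/4)*n*x - (27/4)*n = 0 → x = kn)
    (hk : kn ≤ k) :
    (k^2 - 3*n + Real.sqrt (k^4 - 6*n*k^2 - 6*n*k)) / (3*n) ≥ 2 :=
  stmt_14_general n kn k hkn hk
end

section
/- Let $n \geq 2$ and let $k(n)$ be the unique positive root of $k^3 - \frac{27}{4}nk - \frac{27}{4}n$. The function $k \mapsto z(k,n) = \frac{k^2 - 3n + \sqrt{k^4 - 6nk^2 - 6nk}}{3n}$ is monotone increasing on $[k(n), +\infty)$. -/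
/-!
Write `P₁(k) = k³ - 27/4·m·k - 27/4·m` and `D(k) = k⁴ - 6mk² - 6mk` for the radicand of `z`.
At a positive point with `P₁(k) ≥ 0` we have `k² ≥ 27m/4`, which makes `P₁` increasing from there
on, so `P₁ ≥ 0` persists on `[k(n), ∞)`. There `D` is increasing as well, because
`P₁(a) ≥ 0` gives `4a³ ≥ 12ma + 6m`, i.e. `D'(a) ≥ 0`; hence numerator and square root of `z`
both increase.
-/

open Set

namespace KCubic

noncomputable def cubic (m k : ℝ) : ℝ := k ^ 3 - 27 / 4 * m * k - 27 / 4 * m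

def disc (m k : ℝ) : ℝ := k ^ 4 - 6 * m * k ^ 2 - 6 * m * k

noncomputable def z (m k : ℝ) : ℝ := (k ^ 2 - 3 * m + Real.sqrt (disc m k)) / (3 * m)

variable {m a b : ℝ}

lemma sq_ge_of_cubic_nonneg (ha : 0 < a) (h : 0 ≤ cubic m a) : 27 / 4 * m ≤ a ^ 2 := by
  unfold cubic at h
  rcases le_or_gt m 0 with hm | hm
  · nlinarith [sq_nonneg a]
  · nlinarith [mul_pos ha hm]

lemma cubic_le_cubic (ha : 0 ≤ a) (ha2 : 27 / 4 * m ≤ a ^ 2) (hab : a ≤ b) :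
    cubic m a ≤ cubic m b := by
  have hfactor : cubic m b - cubic m a = (b - a) * (a ^ 2 + a * b + b ^ 2 - 27 / 4 * m) := by
    unfold cubic; ring
  have hb : 0 ≤ b := ha.trans hab
  nlinarith [mul_nonneg (sub_nonneg.2 hab) (mul_nonneg ha hb),
    mul_nonneg (sub_nonneg.2 hab) (sq_nonneg b), mul_nonneg (sub_nonneg.2 hab) (sub_nonneg.2 ha2)]

lemma disc_le_disc (hm : 0 ≤ m) (ha : 0 < a) (h : 0 ≤ cubic m a) (hab : a ≤ b) :
    disc m a ≤ disc m b := by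
  have ha2 := sq_ge_of_cubic_nonneg ha h
  have hfactor : disc m b - disc m a =
      (b - a) * ((a + b) * (a ^ 2 + b ^ 2 - 6 * m) - 6 * m) := by
    unfold disc; ring
  -- `a + b ≥ 2a` and `a² + b² - 6m ≥ 2a² - 6m ≥ 0` reduce the bracket to `4a³ - 12ma - 6m`
  have hbracket : 0 ≤ (a + b) * (a ^ 2 + b ^ 2 - 6 * m) - 6 * m := by
    unfold cubic at h
    nlinarith [mul_le_mul_of_nonneg_right (by linarith : 2 * a ≤ a + b)
      (by nlinarith : 0 ≤ a ^ 2 + b ^ 2 - 6 * m),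
      mul_le_mul_of_nonneg_left (by nlinarith : 2 * a ^ 2 - 6 * m ≤ a ^ 2 + b ^ 2 - 6 * m)
        (by linarith : 0 ≤ 2 * a), mul_nonneg ha.le hm]
  nlinarith [mul_nonneg (sub_nonneg.2 hab) hbracket]

theorem z_monotoneOn {k₀ : ℝ} (hm : 0 ≤ m) (hk₀ : 0 < k₀) (h : 0 ≤ cubic m k₀) :
    MonotoneOn (z m) (Ici k₀) := by
  intro a ha b _ hab
  have ha0 : 0 < a := hk₀.trans_le ha
  have hcubic : 0 ≤ cubic m a :=
    h.trans (cubic_le_cubic hk₀.le (sq_ge_of_cubic_nonneg hk₀ h) ha)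
  unfold z
  gcongr
  exact disc_le_disc hm ha0 hcubic hab

end KCubic

theorem stmt_15_general (n : ℕ) (kn : ℝ)
    (hkn : 0 < kn ∧ kn^3 - (27/4)*n*kn - (27/4)*n = 0 ∧
      ∀ x : ℝ, 0 < x → x^3 - (27/4)*n*x - (27/4)*n = 0 → x = kn) :
    MonotoneOn (fun k : ℝ => (k^2 - 3*n + Real.sqrt (k^4 - 6*n*k^2 - 6*n*k)) / (3*n))
      (Set.Ici kn) :=
  KCubic.z_monotoneOn n.cast_nonneg hkn.1 hkn.2.1.ge

theorem stmt_15 (n : ℕ) (hn : 2 ≤ n) (kn : ℝ)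
    (hkn : 0 < kn ∧ kn^3 - (27/4)*n*kn - (27/4)*n = 0 ∧
      ∀ x : ℝ, 0 < x → x^3 - (27/4)*n*x - (27/4)*n = 0 → x = kn) :
    MonotoneOn (fun k : ℝ => (k^2 - 3*n + Real.sqrt (k^4 - 6*n*k^2 - 6*n*k)) / (3*n))
      (Set.Ici kn) :=
  stmt_15_general n kn hkn
end

section
/- Let $n \geq 2$, $k \geq k(n)$ (where $k(n)$ is the unique positive root of $k^3 - \frac{27}{4}nk - \frac{27}{4}n$), and $z(k,n) = \frac{k^2-3n+\sqrt{k^4-6nk^2-6nk}}{3n}$. Then $H(z(k,n),k) \geq 0$, where $H(z,k) = -nz^3 + (k^2-3n)z^2 - (3n+2k)z - (n-1)$. -/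
/-!
`H(·, k)` is a cubic in `z` and `z(k, n)` is its local maximum. At the local maximum
`(-b - √Δ₀) / (3a)` of a cubic `az³ + bz² + cz + d` one has `27a² f = Δ₁ + 2Δ₀^{3/2}` with
`Δ₀ = b² - 3ac`, `Δ₁ = 2b³ - 9abc + 27a²d`, while `4Δ₀³ - Δ₁² = 27a² disc`; so the local maximum
is nonnegative as soon as the discriminant is. For `H(·, k)` the discriminant factors as
`n (k + 1)³ (4k³ - 27nk - 27n) = 4n (k + 1)³ P₁(k)`, which is nonnegative for `k ≥ k(n)`.
-/

namespace Cubic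

variable {R : Type*} [CommRing R]

theorem eval_toPoly (P : Cubic R) (x : R) :
    P.toPoly.eval x = P.a * x ^ 3 + P.b * x ^ 2 + P.c * x + P.d := by
  simp [toPoly]

theorem four_mul_cube_sub_sq_eq_discr (P : Cubic R) :
    4 * (P.b ^ 2 - 3 * P.a * P.c) ^ 3
      - (2 * P.b ^ 3 - 9 * P.a * P.b * P.c + 27 * P.a ^ 2 * P.d) ^ 2
      = 27 * P.a ^ 2 * P.discr := by
  simp only [discr]; ring

theorem eval_critical_point {P : Cubic R} {s z : R}
    (hs : s ^ 2 = P.b ^ 2 - 3 * P.a * P.c) (hz : 3 * P.a * z = -P.b - s) :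
    27 * P.a ^ 2 * P.toPoly.eval z
      = 2 * P.b ^ 3 - 9 * P.a * P.b * P.c + 27 * P.a ^ 2 * P.d + 2 * s ^ 3 := by
  rw [eval_toPoly]
  linear_combination ((3 * P.a * z) ^ 2 + 3 * P.a * z * (-P.b - s) + (-P.b - s) ^ 2
    + 3 * P.b * (3 * P.a * z + (-P.b - s)) + 9 * P.a * P.c) * hz - 3 * s * hs

theorem eval_localMax_nonneg {P : Cubic ℝ} (ha : P.a ≠ 0) (hdisc : 0 ≤ P.discr) :
    0 ≤ P.toPoly.eval ((-P.b - √(P.b ^ 2 - 3 * P.a * P.c)) / (3 * P.a)) := by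
  set Δ₀ := P.b ^ 2 - 3 * P.a * P.c
  set Δ₁ := 2 * P.b ^ 3 - 9 * P.a * P.b * P.c + 27 * P.a ^ 2 * P.d
  have hΔ : Δ₁ ^ 2 ≤ 4 * Δ₀ ^ 3 := by
    nlinarith [P.four_mul_cube_sub_sq_eq_discr, mul_nonneg (sq_nonneg P.a) hdisc]
  have hΔ₀ : 0 ≤ Δ₀ := by
    have : 0 ≤ Δ₀ ^ 3 := by nlinarith [sq_nonneg Δ₁]
    exact (Odd.pow_nonneg_iff (by decide)).mp this
  set s := √Δ₀
  have hs : s ^ 2 = Δ₀ := Real.sq_sqrt hΔ₀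
  have hΔ₁ : -(2 * s ^ 3) ≤ Δ₁ := by
    refine (abs_le_of_sq_le_sq' ?_ (by positivity)).1
    calc Δ₁ ^ 2 ≤ 4 * Δ₀ ^ 3 := hΔ
      _ = (2 * s ^ 3) ^ 2 := by rw [← hs]; ring
  have h27 := eval_critical_point (P := P) hs (z := (-P.b - s) / (3 * P.a))
    (by field_simp)
  refine nonneg_of_mul_nonneg_right (a := 27 * P.a ^ 2) ?_ (by positivity)
  rw [h27]
  linarith

end Cubic

theorem le_four_mul_cube_of_root_le {n r k : ℝ} (hr : 0 < r)
    (hroot : r ^ 3 - 27 / 4 * n * r - 27 / 4 * n = 0) (hk : r ≤ k) :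
    27 * n * k + 27 * n ≤ 4 * k ^ 3 := by
  -- `r (4r² - 27n) = 27n`
  have hr2 : 27 * n < 4 * r ^ 2 := by nlinarith
  have hfactor : 0 ≤ (k - r) * (4 * k ^ 2 + 4 * k * r + 4 * r ^ 2 - 27 * n) :=
    mul_nonneg (sub_nonneg.mpr hk) (by nlinarith)
  linarith

def cubicH (n k : ℝ) : Cubic ℝ := ⟨-n, k ^ 2 - 3 * n, -(3 * n + 2 * k), -(n - 1)⟩

theorem cubicH_discr (n k : ℝ) :
    (cubicH n k).discr = n * (k + 1) ^ 3 * (4 * k ^ 3 - 27 * n * k - 27 * n) := by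
  simp only [Cubic.discr, cubicH]; ring

theorem cubicH_eval (n k z : ℝ) :
    (cubicH n k).toPoly.eval z
      = -n * z ^ 3 + (k ^ 2 - 3 * n) * z ^ 2 - (3 * n + 2 * k) * z - (n - 1) := by
  rw [Cubic.eval_toPoly, cubicH]; ring

theorem cubicH_localMax (n k : ℝ) :
    (-(cubicH n k).b - √((cubicH n k).b ^ 2 - 3 * (cubicH n k).a * (cubicH n k).c))
      / (3 * (cubicH n k).a)
      = (k ^ 2 - 3 * n + √(k ^ 4 - 6 * n * k ^ 2 - 6 * n * k)) / (3 * n) := by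
  have hΔ₀ : (k ^ 2 - 3 * n) ^ 2 - 3 * (-n) * (-(3 * n + 2 * k))
      = k ^ 4 - 6 * n * k ^ 2 - 6 * n * k := by ring
  simp only [cubicH]
  rw [hΔ₀]
  ring

theorem stmt_16_general (n : ℕ) (kn k : ℝ)
    (hkn : 0 < kn ∧ kn^3 - (27/4)*n*kn - (27/4)*n = 0 ∧
      ∀ x : ℝ, 0 < x → x^3 - (27/4)*n*x - (27/4)*n = 0 → x = kn)
    (hk : kn ≤ k) :
    let z := (k^2 - 3*n + Real.sqrt (k^4 - 6*n*k^2 - 6*n*k)) / (3*n)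
    (-(n:ℝ)*z^3 + (k^2 - 3*n)*z^2 - (3*n + 2*k)*z - (n - 1) ≥ 0) := by
  obtain ⟨hkn_pos, hkn_root, -⟩ := hkn
  have hn : (0 : ℝ) < n := by nlinarith [pow_pos hkn_pos 3, (Nat.cast_nonneg n : (0 : ℝ) ≤ n)]
  have hk_pos : 0 < k := hkn_pos.trans_le hk
  have hdisc : 0 ≤ (cubicH n k).discr := by
    rw [cubicH_discr]
    have hP₁ := le_four_mul_cube_of_root_le hkn_pos hkn_root hk
    exact mul_nonneg (mul_nonneg hn.le (pow_nonneg (by linarith) 3)) (by linarith)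
  have hmax := Cubic.eval_localMax_nonneg (neg_ne_zero.mpr hn.ne') hdisc
  rwa [cubicH_localMax, cubicH_eval] at hmax

theorem stmt_16 (n : ℕ) (hn : 2 ≤ n) (kn k : ℝ)
    (hkn : 0 < kn ∧ kn^3 - (27/4)*n*kn - (27/4)*n = 0 ∧
      ∀ x : ℝ, 0 < x → x^3 - (27/4)*n*x - (27/4)*n = 0 → x = kn)
    (hk : kn ≤ k) :
    let z := (k^2 - 3*n + Real.sqrt (k^4 - 6*n*k^2 - 6*n*k)) / (3*n)
    (-(n:ℝ)*z^3 + (k^2 - 3*n)*z^2 - (3*n + 2*k)*z - (n - 1) ≥ 0) :=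
  stmt_16_general n kn k hkn hk
end

section
/- Let $n \geq 2$, and let $k(n)$ be the unique positive root of $k^3 - \frac{27}{4}nk - \frac{27}{4}n$. If $k > \frac{3n + \sqrt{9n^2+12n}}{2}$, then $k \geq k(n)$ and $k < z(k,n)$, where $z(k,n) = \frac{k^2-3n+\sqrt{k^4-6nk^2-6nk}}{3n}$; i.e., for such $k$ the admissible quintuple $(z(k,n)+1, k, 1, z(k,n)+1, k+1)$ satisfies $b - a + c < 0$. -/
noncomputable def zRoot (N k : ℝ) : ℝ :=
  (k^2 - 3*N + √(k^4 - 6*N*k^2 - 6*N*k)) / (3*N)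

lemma lt_of_forall_pos_root_eq {f : ℝ → ℝ} (hf : Continuous f) {r k : ℝ} (hk : 0 ≤ k)
    (hf0 : f 0 < 0) (hfk : 0 < f k) (hr : ∀ x, 0 < x → f x = 0 → x = r) : r < k := by
  obtain ⟨x, hx, hfx⟩ := intermediate_value_Ioo hk hf.continuousOn ⟨hf0, hfk⟩
  exact hr x hx.1 hfx ▸ hx.2

section

variable {N k : ℝ}

lemma sq_gt_of_half_add_sqrt_lt (hN : 0 ≤ N) (hk : (3*N + √(9*N^2 + 12*N)) / 2 < k) :
    3*N*k + 3*N < k^2 := by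
  have hsq : √(9*N^2 + 12*N) ^ 2 = 9*N^2 + 12*N := Real.sq_sqrt (by positivity)
  nlinarith [Real.sqrt_nonneg (9*N^2 + 12*N)]

lemma three_mul_lt_of_sq_gt (hk0 : 0 < k) (hk : 3*N*k + 3*N < k^2) : 3*N < k := by
  nlinarith

lemma cubic_pos_of_sq_gt (hN : 1 ≤ N) (hk0 : 0 < k) (hk : 3*N*k + 3*N < k^2) :
    0 < k^3 - (27/4)*N*k - (27/4)*N := by
  have h3 := three_mul_lt_of_sq_gt hk0 hk
  nlinarith [mul_lt_mul_of_pos_left hk hk0]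

lemma discr_pos_of_sq_gt (hN : 1 ≤ N) (hk0 : 0 < k) (hk : 3*N*k + 3*N < k^2) :
    0 < k^4 - 6*N*k^2 - 6*N*k := by
  have h3 := three_mul_lt_of_sq_gt hk0 hk
  nlinarith [mul_lt_mul'' hk hk (by positivity) (by positivity)]

lemma lt_zRoot (hN : 0 < N) (hk : 3*N*k + 3*N < k^2) : k < zRoot N k := by
  rw [zRoot, lt_div_iff₀ (by positivity)]
  nlinarith [Real.sqrt_nonneg (k^4 - 6*N*k^2 - 6*N*k)]

lemma zRoot_quadratic (hN : 0 < N) (hD : 0 ≤ k^4 - 6*N*k^2 - 6*N*k) :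
    3*N*zRoot N k ^ 2 - 2*(k^2 - 3*N)*zRoot N k + (3*N + 2*k) = 0 := by
  have hz : 3*N*zRoot N k = k^2 - 3*N + √(k^4 - 6*N*k^2 - 6*N*k) := by
    rw [zRoot]; field_simp
  refine mul_left_cancel₀ (by positivity : 3*N ≠ 0) ?_
  linear_combination (3*N*zRoot N k - (k^2 - 3*N) + √(k^4 - 6*N*k^2 - 6*N*k)) * hz +
    Real.sq_sqrt hD

lemma nine_mul_sub_eq_of_quadratic {z : ℝ}
    (hz : 3*N*z^2 - 2*(k^2 - 3*N)*z + (3*N + 2*k) = 0) :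
    9*N*((k*z - 1)^2 - N*(z + 1)^3)
      = 2*(k^4 - 6*N*k^2 - 6*N*k)*z - (2*k^3 + 3*N*k^2 - 6*N*k - 9*N) := by
  linear_combination (-3*N*z + k^2 - 3*N) * hz

lemma cubic_le_discr_mul_of_sq_gt (hN : 1 ≤ N) (hk0 : 0 < k) (hk : 3*N*k + 3*N < k^2) :
    2*k^3 + 3*N*k^2 - 6*N*k - 9*N ≤ 2*(k^4 - 6*N*k^2 - 6*N*k)*k := by
  have h3N := three_mul_lt_of_sq_gt hk0 hk
  have h3 : 3 < k := by linarith
  have hD : k^4 - 2*k^3 < k^4 - 6*N*k^2 - 6*N*k := by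
    nlinarith [mul_lt_mul_of_pos_left hk hk0]
  have hC : 3*N*k^2 < k^3 := by nlinarith [mul_lt_mul_of_pos_left h3N (pow_pos hk0 2)]
  have hk5 : 3*k^3 ≤ 2*(k^4 - 2*k^3)*k := by
    nlinarith [mul_nonneg (mul_nonneg (sub_nonneg.2 h3.le) (by linarith : (0:ℝ) ≤ k + 1))
      (pow_pos hk0 3).le]
  nlinarith [mul_lt_mul_of_pos_left hD hk0]

lemma sq_sub_mul_cube_nonneg (hN : 1 ≤ N) (hk0 : 0 < k) (hk : 3*N*k + 3*N < k^2) :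
    0 ≤ (k*zRoot N k - 1)^2 - N*(zRoot N k + 1)^3 := by
  have hD := discr_pos_of_sq_gt hN hk0 hk
  have hkz := lt_zRoot (by linarith) hk
  have h9 : 0 ≤ 9*N*((k*zRoot N k - 1)^2 - N*(zRoot N k + 1)^3) := by
    rw [nine_mul_sub_eq_of_quadratic (zRoot_quadratic (by linarith) hD.le)]
    nlinarith [mul_lt_mul_of_pos_left hkz hD, cubic_le_discr_mul_of_sq_gt hN hk0 hk]
  exact (mul_nonneg_iff_of_pos_left (by linarith)).1 h9

end

lemma admissible_zRoot {n : ℕ} {k : ℝ} (hn : 1 ≤ n) (hk0 : 0 < k) (hk : 3*n*k + 3*n < k^2) :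
    Admissible n (zRoot n k + 1) k 1 (zRoot n k + 1) (k + 1) := by
  have hN : (1 : ℝ) ≤ n := by exact_mod_cast hn
  have hz := lt_zRoot (by linarith) hk
  refine ⟨le_rfl, by linarith, one_pos, by linarith, hk0.le, ?_⟩
  have hexpr : (zRoot n k + 1 - 1)^2 * (k + 1)^2 - (zRoot n k + 1) * (k + 1 - k) *
      ((2*(k + 1) + n*(zRoot n k + 1)) * (zRoot n k + 1 - 1) +
        (zRoot n k + 1) * (n - 1) * (k + 1 - k))
      = (k*zRoot n k - 1)^2 - n*(zRoot n k + 1)^3 := by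
    ring
  rw [ge_iff_le, hexpr]
  exact sq_sub_mul_cube_nonneg hN hk0 hk

theorem stmt_19 (n : ℕ) (hn : 2 ≤ n) (kn k : ℝ)
    (hkn : 0 < kn ∧ kn^3 - (27/4)*n*kn - (27/4)*n = 0 ∧
      ∀ x : ℝ, 0 < x → x^3 - (27/4)*n*x - (27/4)*n = 0 → x = kn)
    (hk : (3*n + Real.sqrt (9*n^2 + 12*n)) / 2 < k) :
    let z := (k^2 - 3*n + Real.sqrt (k^4 - 6*n*k^2 - 6*n*k)) / (3*n)
    kn ≤ k ∧ k < z ∧ Admissible n (z+1) k 1 (z+1) (k+1) ∧ k - (z+1) + 1 < 0 := by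
  intro z
  have hN : (1 : ℝ) ≤ n := by exact_mod_cast (by omega : 1 ≤ n)
  have hsq := sq_gt_of_half_add_sqrt_lt (by linarith) hk
  have hk0 : 0 < k := by linarith [Real.sqrt_nonneg (9*n^2 + 12*n : ℝ)]
  have hkz : k < z := lt_zRoot (by linarith) hsq
  have hknk : kn < k :=
    lt_of_forall_pos_root_eq (f := fun x => x^3 - (27/4)*n*x - (27/4)*n) (by fun_prop) hk0.le
      (by norm_num; linarith) (cubic_pos_of_sq_gt hN hk0 hsq) hkn.2.2
  exact ⟨hknk.le, hkz, admissible_zRoot (by omega) hk0 hsq, by linarith⟩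
end
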